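/- Let $K^n = W_1 \oplus \dots \oplus W_p$ be an (internal) direct sum decomposition into nonzero subspaces, let $D = (W_1, \dots, W_p)$, and for $1 \le i \le p-1$ let $D_i = (W_1, \dots, W_{i-1}, W_i \oplus W_{i+1}, W_{i+2}, \dots, W_p)$ be the decomposition obtained by merging the $i$-th and $(i+1)$-st summands. Then $I(S_{D_i}) \le_{\mathrm{lex}} I(S_D)$ in the lexicographic order on $\{1, \dots, n\}^n \times \mathbb{N}$. -/

import Mathlib

/-- The pivot set of a subspace `W ⊆ K^n`: indices `k` such that some `w ∈ W` has
`w k ≠ 0` and `w i = 0` for all `i < k`. -/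
def pivotSet {K : Type*} [Field K] {n : ℕ} (W : Submodule K (Fin n → K)) : Set (Fin n) :=
  {k | ∃ w ∈ W, w k ≠ 0 ∧ ∀ i < k, w i = 0}

/-- `S_W`: the list of elements of the pivot set of `W` in increasing order, recorded as
one-based indices (i.e. as elements of `{1, …, n}`). -/
noncomputable def pivotList {K : Type*} [Field K] {n : ℕ}
    (W : Submodule K (Fin n → K)) : List ℕ :=
  ((Set.toFinite (pivotSet W)).toFinset.sort (· ≤ ·)).map (fun k => (k : ℕ) + 1)

/-- `S_D`: the concatenation `S_{W_1} S_{W_2} ⋯ S_{W_p}` for a tuple of subspaces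
`D = (W_1, …, W_p)` given as a list. -/
noncomputable def decompList {K : Type*} [Field K] {n : ℕ}
    (D : List (Submodule K (Fin n → K))) : List ℕ :=
  (D.map pivotList).flatten

/-- The number of inversions of a list `l` of natural numbers: the number of pairs of
positions `(i, j)` with `i < j` and `l[i] > l[j]`. -/
def inversions (l : List ℕ) : ℕ :=
  (Finset.univ.filter
    (fun p : Fin l.length × Fin l.length => p.1 < p.2 ∧ l.get p.2 < l.get p.1)).card

/-- `I(S) = (c_1, …, c_n, k)` where `c_i` is the number of occurrences of `i` in `S` and
`k` is the number of inversions of `S`, encoded as the list `[c_1, …, c_n, k]`. -/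
def invariant (n : ℕ) (S : List ℕ) : List ℕ :=
  ((List.range n).map (fun i => S.count (i + 1))) ++ [inversions S]

/-- The (non-strict) lexicographic order on lists of natural numbers. -/
def lexLe (a b : List ℕ) : Prop :=
  a = b ∨ List.Lex (· < ·) a b

/-- `D` is a decomposition of `K^n` into (an internal direct sum of) nonzero subspaces. -/
def IsDecomposition {K : Type*} [Field K] {n : ℕ}
    (D : List (Submodule K (Fin n → K))) : Prop :=
  (∀ W ∈ D, W ≠ ⊥) ∧ iSupIndep (fun i : Fin D.length => D.get i) ∧
    (⨆ i : Fin D.length, D.get i) = ⊤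

/-! ### Auxiliary material -/

section InversionsAux

open Finset List

lemma countP_eq_sum_fin {α : Type*} (p : α → Bool) (t : List α) :
    t.countP p = ∑ j : Fin t.length, if p (t.get j) then 1 else 0 := by
  induction t with
  | nil => simp
  | cons a t ih =>
      rw [List.countP_cons]
      simp only [List.length_cons]
      rw [Fin.sum_univ_succ]
      by_cases hpa : p a <;> simp [ih, add_comm, hpa]

lemma inversions_eq_sum (l : List ℕ) :
    inversions l = ∑ i : Fin l.length, ∑ j : Fin l.length,
      if i < j ∧ l.get j < l.get i then 1 else 0 := by
  rw [inversions, Finset.card_filter, ← Finset.sum_product']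
  rfl

lemma inversions_cons (a : ℕ) (t : List ℕ) :
    inversions (a :: t) = t.countP (fun b => b < a) + inversions t := by
  rw [inversions_eq_sum, inversions_eq_sum, countP_eq_sum_fin]
  simp only [List.length_cons]
  rw [Fin.sum_univ_succ]
  congr 1
  · rw [Fin.sum_univ_succ]
    simp [Fin.succ_pos]
  · rw [Finset.sum_congr rfl]
    intro i _
    rw [Fin.sum_univ_succ]
    simp [Fin.succ_lt_succ_iff]

lemma inversions_nil : inversions [] = 0 := rfl

/-- cross inversions between two lists. -/
def crossCount (l1 l2 : List ℕ) : ℕ :=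
  (l1.map (fun a => l2.countP (fun b => b < a))).sum

lemma inversions_append (l1 l2 : List ℕ) :
    inversions (l1 ++ l2) = inversions l1 + inversions l2 + crossCount l1 l2 := by
  induction l1 with
  | nil => simp [inversions_nil, crossCount]
  | cons a t ih =>
      rw [List.cons_append, inversions_cons, inversions_cons, ih, List.countP_append]
      simp [crossCount]
      omega

lemma crossCount_append_left (l1 l2 l3 : List ℕ) :
    crossCount (l1 ++ l2) l3 = crossCount l1 l3 + crossCount l2 l3 := by
  simp [crossCount]

lemma crossCount_perm_left {l1 l1' : List ℕ} (h : l1.Perm l1') (l2 : List ℕ) :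
    crossCount l1 l2 = crossCount l1' l2 :=
  List.Perm.sum_eq (h.map _)

lemma crossCount_perm_right {l2 l2' : List ℕ} (h : l2.Perm l2') (l1 : List ℕ) :
    crossCount l1 l2 = crossCount l1 l2' := by
  unfold crossCount
  congr 1
  apply List.map_congr_left
  intro a _
  exact h.countP_eq _

lemma inversions_sorted_eq_zero {l : List ℕ} (h : l.Pairwise (· ≤ ·)) :
    inversions l = 0 := by
  induction l with
  | nil => exact inversions_nil
  | cons a t ih =>
      rw [inversions_cons, ih (List.pairwise_cons.mp h).2]
      rw [List.countP_eq_zero.mpr]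
      intro b hb
      simpa using (List.pairwise_cons.mp h).1 b hb

lemma inversions_middle_le (x y M M' : List ℕ) (hp : M.Perm M') (hs : M.Pairwise (· ≤ ·)) :
    inversions (x ++ M ++ y) ≤ inversions (x ++ M' ++ y) := by
  rw [inversions_append, inversions_append, inversions_append, inversions_append,
    crossCount_append_left, crossCount_append_left]
  rw [inversions_sorted_eq_zero hs, crossCount_perm_right hp x, crossCount_perm_left hp y]
  omega

end InversionsAux

section LexAux

lemma lexLe_aux (xs : List ℕ) : ∀ (ys : List ℕ), xs.length = ys.length →
    (∀ m, ((xs.take m).sum ≤ (ys.take m).sum)) → ∀ a b : ℕ, (xs = ys → a ≤ b) →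
    lexLe (xs ++ [a]) (ys ++ [b]) := by
  induction xs with
  | nil =>
      intro ys hlen _ a b hab
      have hys : ys = [] := List.length_eq_zero_iff.mp (by simpa using hlen.symm)
      subst hys
      have h := hab rfl
      rcases Nat.lt_or_ge a b with h' | h'
      · exact Or.inr (List.Lex.rel h')
      · have : a = b := le_antisymm h h'
        exact Or.inl (by rw [this])
  | cons x xs ih =>
      intro ys hlen hsum a b hab
      match ys with
      | [] => simp at hlen
      | y :: ys =>
          have hxy : x ≤ y := by simpa using hsum 1
          rcases lt_or_eq_of_le hxy with h | h
          · exact Or.inr (List.Lex.rel h)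
          · subst h
            have hlen' : xs.length = ys.length := by simpa using hlen
            have hsum' : ∀ m, (xs.take m).sum ≤ (ys.take m).sum := by
              intro m
              have := hsum (m + 1)
              simpa using this
            have hab' : xs = ys → a ≤ b := fun h => hab (by rw [h])
            rcases ih ys hlen' hsum' a b hab' with h | h
            · exact Or.inl (by rw [List.cons_append, List.cons_append, h])
            · exact Or.inr (List.Lex.cons h)

lemma take_map_range (f : ℕ → ℕ) (n m : ℕ) :
    (((List.range n).map f).take m) = (List.range (min m n)).map f := by
  rw [← List.map_take, List.take_range]

lemma sum_map_range (f : ℕ → ℕ) (n : ℕ) :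
    ((List.range n).map f).sum = ∑ i ∈ Finset.range n, f i := by
  induction n with
  | zero => simp
  | succ n ih => simp [List.range_succ, Finset.sum_range_succ, ih]

end LexAux

section LinearAux

open Finset List Module Submodule

variable {K : Type*} [Field K] {n : ℕ}


variable {K : Type*} [Field K] {n : ℕ}

/-- truncation to the first `m` coordinates, as a linear map `K^n → K^n`. -/
def trunc (K : Type*) [Field K] (n m : ℕ) : (Fin n → K) →ₗ[K] (Fin n → K) where
  toFun w := fun j => if (j : ℕ) < m then w j else 0
  map_add' u v := by ext j; by_cases h : (j : ℕ) < m <;> simp [h]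
  map_smul' c u := by ext j; by_cases h : (j : ℕ) < m <;> simp [h]

lemma trunc_apply (m : ℕ) (w : Fin n → K) (j : Fin n) :
    trunc K n m w j = if (j : ℕ) < m then w j else 0 := rfl

/-- A family of vectors with distinct "pivot" coordinates is linearly independent. -/
lemma linearIndependent_of_pivots {ι : Type*} [DecidableEq ι] (e : ι → Fin n) (he : Function.Injective e)
    (v : ι → Fin n → K) (hv : ∀ i, v i (e i) ≠ 0)
    (hv0 : ∀ i, ∀ k : Fin n, k < e i → v i k = 0) :
    LinearIndependent K v := by
  rw [linearIndependent_iff']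
  intro s g hsum
  induction s using Finset.strongInduction with
  | _ s ih =>
    intro i hi
    have hne : s.Nonempty := ⟨i, hi⟩
    obtain ⟨i0, hi0, hmin⟩ := Finset.exists_min_image s e hne
    have hg0 : g i0 = 0 := by
      have := congrFun hsum (e i0)
      rw [Finset.sum_apply] at this
      simp only [Pi.smul_apply, Pi.zero_apply] at this
      rw [Finset.sum_eq_single i0] at this
      · have := mul_eq_zero.mp this
        rcases this with h | h
        · exact h
        · exact absurd h (hv i0)
      · intro j hj hji
        have : e i0 < e j := lt_of_le_of_ne (hmin j hj) (fun h => hji (he h.symm))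
        rw [hv0 j (e i0) this, smul_zero]
      · intro h; exact absurd hi0 h
    by_cases hii : i = i0
    · rw [hii]; exact hg0
    · have hsum' : ∑ j ∈ s.erase i0, g j • v j = 0 := by
        rw [← Finset.add_sum_erase s _ hi0] at hsum
        rw [hg0, zero_smul, zero_add] at hsum
        exact hsum
      exact ih (s.erase i0) (Finset.erase_ssubset hi0) hsum' i
        (Finset.mem_erase.mpr ⟨hii, hi⟩)

namespace PivotAux

variable (W : Submodule K (Fin n → K))

noncomputable def wit (k : Fin n) (hk : k ∈ pivotSet W) : Fin n → K := hk.choose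

lemma wit_mem (k : Fin n) (hk : k ∈ pivotSet W) : wit W k hk ∈ W := hk.choose_spec.1
lemma wit_ne (k : Fin n) (hk : k ∈ pivotSet W) : wit W k hk k ≠ 0 := hk.choose_spec.2.1
lemma wit_zero (k : Fin n) (hk : k ∈ pivotSet W) : ∀ i < k, wit W k hk i = 0 :=
  hk.choose_spec.2.2

/-- index type for pivots below `m` -/
abbrev idx (m : ℕ) : Type _ := {k : Fin n // k ∈ pivotSet W ∧ (k : ℕ) < m}

noncomputable def fam (m : ℕ) : idx W m → (Fin n → K) :=
  fun k => trunc K n m (wit W k.1 k.2.1)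

lemma fam_indep (m : ℕ) : LinearIndependent K (fam W m) := by
  apply linearIndependent_of_pivots (fun k : idx W m => k.1) (fun a b h => Subtype.ext h)
  · intro i
    rw [fam, trunc_apply, if_pos i.2.2]
    exact wit_ne W i.1 i.2.1
  · intro i k hk
    rw [fam, trunc_apply]
    split
    · exact wit_zero W i.1 i.2.1 k hk
    · rfl

lemma trunc_wit_mem_span (m : ℕ) (k : Fin n) (hk : k ∈ pivotSet W) :
    trunc K n m (wit W k hk) ∈ Submodule.span K (Set.range (fam W m)) := by
  by_cases hkm : (k : ℕ) < m
  · exact Submodule.subset_span ⟨⟨k, hk, hkm⟩, rfl⟩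
  · have : trunc K n m (wit W k hk) = 0 := by
      funext j
      rw [trunc_apply]
      split
      · exact wit_zero W k hk j (Fin.lt_def.mpr (by omega))
      · rfl
    show trunc K n m (wit W k hk) ∈ _
    rw [this]; exact Submodule.zero_mem _

lemma span_fam (m : ℕ) :
    W.map (trunc K n m) = Submodule.span K (Set.range (fam W m)) := by
  apply _root_.le_antisymm
  · rintro _ ⟨u, hu, rfl⟩
    -- downward induction
    suffices H : ∀ c j : ℕ, n ≤ j + c → ∀ u ∈ W, (∀ i : Fin n, (i : ℕ) < j → u i = 0) →
        trunc K n m u ∈ Submodule.span K (Set.range (fam W m)) by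
      exact H n 0 (by omega) u hu (fun i h => absurd h (by omega))
    intro c
    induction c with
    | zero =>
        intro j hj u hu h0
        have : u = 0 := funext fun i => h0 i (by omega)
        rw [this, map_zero]; exact Submodule.zero_mem _
    | succ c ih =>
        intro j hj u hu h0
        by_cases hjn : j < n
        · set jf : Fin n := ⟨j, hjn⟩ with hjf
          by_cases hz : u jf = 0
          · refine ih (j+1) (by omega) u hu (fun i hi => ?_)
            rcases Nat.lt_succ_iff_lt_or_eq.mp hi with h | h
            · exact h0 i h
            · have : i = jf := Fin.ext h
              rw [this]; exact hz
          · have hkP : jf ∈ pivotSet W := ⟨u, hu, hz, fun i hi => h0 i hi⟩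
            set w := wit W jf hkP with hw
            set c0 := u jf / w jf with hc0
            have hu' : u - c0 • w ∈ W := W.sub_mem hu (W.smul_mem _ (wit_mem W jf hkP))
            have h0' : ∀ i : Fin n, (i : ℕ) < j + 1 → (u - c0 • w) i = 0 := by
              intro i hi
              rcases Nat.lt_succ_iff_lt_or_eq.mp hi with h | h
              · have hiw : i < jf := h
                show u i - c0 * w i = 0
                have hwi : w i = 0 := wit_zero W jf hkP i hiw
                rw [h0 i h, hwi, mul_zero, sub_zero]
              · have hij : i = jf := Fin.ext h
                rw [hij]
                show u jf - c0 * w jf = 0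
                rw [hc0, div_mul_cancel₀ _ (wit_ne W jf hkP), sub_self]
            have hmem' := ih (j+1) (by omega) _ hu' h0'
            have hdecomp : trunc K n m u = trunc K n m (u - c0 • w) + c0 • trunc K n m w := by
              rw [← LinearMap.map_smul, ← LinearMap.map_add]
              congr 1
              abel
            rw [hdecomp]
            exact Submodule.add_mem _ hmem'
              (Submodule.smul_mem _ _ (trunc_wit_mem_span W m jf hkP))
        · have : u = 0 := funext fun i => h0 i (by omega)
          rw [this, map_zero]; exact Submodule.zero_mem _
  · rw [Submodule.span_le]
    rintro _ ⟨k, rfl⟩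
    exact ⟨wit W k.1 k.2.1, wit_mem W k.1 k.2.1, rfl⟩

end PivotAux

namespace PivotAux

lemma card_eq_finrank (W : Submodule K (Fin n → K)) (m : ℕ) :
    (((Set.toFinite (pivotSet W)).toFinset.filter (fun k : Fin n => (k : ℕ) < m)).card)
      = Module.finrank K (W.map (trunc K n m)) := by
  letI : Fintype (idx W m) := Fintype.ofFinite _
  rw [span_fam, finrank_span_eq_card (fam_indep W m)]
  rw [← Fintype.card_coe]
  apply Fintype.card_congr
  apply Equiv.subtypeEquivRight
  intro k
  simp [Set.Finite.mem_toFinset]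

lemma trunc_n_eq_id (w : Fin n → K) : trunc K n n w = w := by
  funext j
  rw [trunc_apply, if_pos j.isLt]

lemma map_trunc_n (W : Submodule K (Fin n → K)) : W.map (trunc K n n) = W := by
  ext w
  constructor
  · rintro ⟨u, hu, rfl⟩; rw [trunc_n_eq_id]; exact hu
  · intro hw; exact ⟨w, hw, trunc_n_eq_id w⟩

lemma card_pivotSet (W : Submodule K (Fin n → K)) :
    (Set.toFinite (pivotSet W)).toFinset.card = Module.finrank K W := by
  have := card_eq_finrank W n
  rw [map_trunc_n] at this
  rw [← this]
  rw [Finset.filter_true_of_mem (fun k _ => k.isLt)]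

/-- The key inequality: prefix pivot counts of `U ⊔ V` vs `U` and `V`. -/
lemma card_sup_le (U V : Submodule K (Fin n → K)) (m : ℕ) :
    (((Set.toFinite (pivotSet (U ⊔ V))).toFinset.filter (fun k : Fin n => (k : ℕ) < m)).card)
      ≤ (((Set.toFinite (pivotSet U)).toFinset.filter (fun k : Fin n => (k : ℕ) < m)).card)
        + (((Set.toFinite (pivotSet V)).toFinset.filter (fun k : Fin n => (k : ℕ) < m)).card) := by
  rw [card_eq_finrank, card_eq_finrank, card_eq_finrank, Submodule.map_sup]
  have h := Submodule.finrank_sup_add_finrank_inf_eq (U.map (trunc K n m)) (V.map (trunc K n m))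
  omega

lemma card_sup_eq (U V : Submodule K (Fin n → K)) (h : Disjoint U V) :
    (Set.toFinite (pivotSet (U ⊔ V))).toFinset.card
      = (Set.toFinite (pivotSet U)).toFinset.card
        + (Set.toFinite (pivotSet V)).toFinset.card := by
  rw [card_pivotSet, card_pivotSet, card_pivotSet]
  have h2 := Submodule.finrank_sup_add_finrank_inf_eq U V
  rw [disjoint_iff.mp h] at h2
  simp only [finrank_bot, add_zero] at h2
  omega

end PivotAux


noncomputable def pivotF (W : Submodule K (Fin n → K)) : Finset (Fin n) :=
  (Set.toFinite (pivotSet W)).toFinset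

lemma pivotList_eq (W : Submodule K (Fin n → K)) :
    pivotList W = (((pivotF W).sort (· ≤ ·)).map Fin.val).map (· + 1) := by
  have hco : ∀ l : List (Fin n), (do let a ← l; pure ((a : ℕ)) : List ℕ) = l.map Fin.val := by
    intro l; induction l with
    | nil => rfl
    | cons a t ih => simpa [List.flatMap] using ih
  simp only [pivotList, pivotF]
  rw [hco, List.map_map]

lemma pivotList_sorted (W : Submodule K (Fin n → K)) :
    (pivotList W).Pairwise (· ≤ ·) := by
  rw [pivotList_eq]
  have h1 := Finset.pairwise_sort (pivotF W) (· ≤ ·)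
  apply List.Pairwise.map
  · intro a b (hab : a ≤ b); exact Nat.add_le_add_right hab 1
  · exact List.Pairwise.map _ (fun a b (hab : a ≤ b) => (Fin.le_def.mp hab)) h1

lemma mem_pivotList (W : Submodule K (Fin n → K)) (v : ℕ) (hv : v ∈ pivotList W) :
    1 ≤ v ∧ v ≤ n := by
  rw [pivotList_eq] at hv
  simp only [List.mem_map] at hv
  obtain ⟨_, ⟨k, _, rfl⟩, rfl⟩ := hv
  exact ⟨Nat.le_add_left 1 _, k.isLt⟩

lemma count_pivotList (W : Submodule K (Fin n → K)) (i : ℕ) :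
    (pivotList W).count (i + 1) = if i ∈ (pivotF W).image Fin.val then 1 else 0 := by
  rw [pivotList_eq,
    List.count_map_of_injective (((pivotF W).sort (· ≤ ·)).map Fin.val)
      (· + 1) (fun a b h => Nat.succ_injective h) i]
  have hnd : (((pivotF W).sort (· ≤ ·)).map Fin.val).Nodup :=
    (Finset.sort_nodup _ _).map Fin.val_injective
  have hmem : i ∈ ((pivotF W).sort (· ≤ ·)).map Fin.val ↔ i ∈ (pivotF W).image Fin.val := by
    simp [List.mem_map, Finset.mem_image, Finset.mem_sort]
  by_cases him : i ∈ (pivotF W).image Fin.val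
  · rw [if_pos him]
    exact List.count_eq_one_of_mem hnd (hmem.mpr him)
  · rw [if_neg him]
    exact List.count_eq_zero_of_not_mem (fun h => him (hmem.mp h))

lemma sum_count_pivotList (W : Submodule K (Fin n → K)) (m : ℕ) :
    ∑ i ∈ Finset.range m, (pivotList W).count (i + 1)
      = ((pivotF W).filter (fun k : Fin n => (k : ℕ) < m)).card := by
  have h1 : ((pivotF W).filter (fun k : Fin n => (k : ℕ) < m)).card
      = (((pivotF W).image Fin.val).filter (fun x => x < m)).card := by
    rw [Finset.filter_image]
    exact (Finset.card_image_of_injective _ Fin.val_injective).symm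
  rw [h1]
  rw [Finset.sum_congr rfl (fun i _ => count_pivotList W i)]
  rw [Finset.sum_ite_mem, Finset.sum_const, smul_eq_mul, mul_one]
  congr 1
  ext x
  simp [and_comm]

end LinearAux

section MainAux

open Finset List Module Submodule PivotAux

variable {K : Type*} [Field K] {n : ℕ}

lemma decompList_append (A B : List (Submodule K (Fin n → K))) :
    decompList (A ++ B) = decompList A ++ decompList B := by
  simp [decompList]

lemma decompList_single (U : Submodule K (Fin n → K)) :
    decompList [U] = pivotList U := by
  simp [decompList]

lemma decompList_pair (U V : Submodule K (Fin n → K)) :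
    decompList [U, V] = pivotList U ++ pivotList V := by
  simp [decompList]

lemma getElem_mid1 {α : Type*} (A B : List α) (U V : α) :
    (A ++ [U, V] ++ B)[A.length]'(by simp) = U := by
  rw [List.getElem_append_left (by simp : A.length < (A ++ [U, V]).length)]
  rw [List.getElem_append_right (le_refl A.length)]
  simp

lemma getElem_mid2 {α : Type*} (A B : List α) (U V : α) :
    (A ++ [U, V] ++ B)[A.length + 1]'(by simp) = V := by
  rw [List.getElem_append_left (by simp : A.length + 1 < (A ++ [U, V]).length)]
  rw [List.getElem_append_right (by omega : A.length ≤ A.length + 1)]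
  simp

lemma disjoint_of_decomp (A B : List (Submodule K (Fin n → K)))
    (U V : Submodule K (Fin n → K))
    (h : iSupIndep (fun i : Fin (A ++ [U, V] ++ B).length => (A ++ [U, V] ++ B).get i)) :
    Disjoint U V := by
  set L := A ++ [U, V] ++ B with hL
  have hlen : A.length + 1 < L.length := by
    simp [hL]
  have hlen0 : A.length < L.length := by omega
  set i : Fin L.length := ⟨A.length, hlen0⟩
  set j : Fin L.length := ⟨A.length + 1, hlen⟩
  have hij : i ≠ j := by
    simp [i, j, Fin.ext_iff]
  have hd := h.pairwiseDisjoint hij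
  have h1 : L.get i = U := getElem_mid1 A B U V
  have h2 : L.get j = V := getElem_mid2 A B U V
  rw [Function.onFun, h1, h2] at hd
  exact hd

lemma sum_count_three (l1 l2 l3 : List ℕ) (m : ℕ) :
    ∑ i ∈ Finset.range m, ((l1 ++ l2 ++ l3).count (i + 1))
      = (∑ i ∈ Finset.range m, l1.count (i + 1)) + (∑ i ∈ Finset.range m, l2.count (i + 1))
        + (∑ i ∈ Finset.range m, l3.count (i + 1)) := by
  rw [← Finset.sum_add_distrib, ← Finset.sum_add_distrib]
  apply Finset.sum_congr rfl
  intros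
  simp [List.count_append]
  omega

lemma sum_count_two (l1 l2 : List ℕ) (m : ℕ) :
    ∑ i ∈ Finset.range m, ((l1 ++ l2).count (i + 1))
      = (∑ i ∈ Finset.range m, l1.count (i + 1)) + (∑ i ∈ Finset.range m, l2.count (i + 1)) := by
  rw [← Finset.sum_add_distrib]
  apply Finset.sum_congr rfl
  intros
  simp [List.count_append]

end MainAux

/-- Merging two adjacent summands of a decomposition `K^n = W_1 ⊕ ⋯ ⊕ W_p` does not
increase the invariant `I(S_D)` in the lexicographic order: for the decomposition
`D = (W_1, …, W_{i-1}, U, V, W_{i+2}, …, W_p)` and the merged decomposition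
`D_i = (W_1, …, W_{i-1}, U ⊕ V, W_{i+2}, …, W_p)` we have `I(S_{D_i}) ≤ₗₑₓ I(S_D)`. -/
theorem invariant_merge_le (K : Type*) [Field K] (n : ℕ)
    (A B : List (Submodule K (Fin n → K))) (U V : Submodule K (Fin n → K))
    (hD : IsDecomposition (A ++ [U, V] ++ B)) :
    lexLe (invariant n (decompList (A ++ [U ⊔ V] ++ B)))
      (invariant n (decompList (A ++ [U, V] ++ B))) := by
  classical
  have hdisj : Disjoint U V := disjoint_of_decomp A B U V hD.2.1
  have hS1 : decompList (A ++ [U ⊔ V] ++ B)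
      = decompList A ++ pivotList (U ⊔ V) ++ decompList B := by
    rw [decompList_append, decompList_append, decompList_single]
  have hS2 : decompList (A ++ [U, V] ++ B)
      = decompList A ++ (pivotList U ++ pivotList V) ++ decompList B := by
    rw [decompList_append, decompList_append, decompList_pair]
  rw [invariant, invariant, hS1, hS2]
  apply lexLe_aux
  · simp
  · intro m
    rw [take_map_range, take_map_range, sum_map_range, sum_map_range]
    rw [sum_count_three, sum_count_three, sum_count_two]
    rw [sum_count_pivotList, sum_count_pivotList, sum_count_pivotList]
    have hcard : ((pivotF (U ⊔ V)).filter (fun k : Fin n => (k : ℕ) < min m n)).card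
        ≤ ((pivotF U).filter (fun k : Fin n => (k : ℕ) < min m n)).card
          + ((pivotF V).filter (fun k : Fin n => (k : ℕ) < min m n)).card :=
      PivotAux.card_sup_le U V (min m n)
    omega
  · intro heq
    have hpt : ∀ i ∈ List.range n,
        (decompList A ++ pivotList (U ⊔ V) ++ decompList B).count (i + 1)
          = (decompList A ++ (pivotList U ++ pivotList V) ++ decompList B).count (i + 1) :=
      fun i hi => List.map_inj_left.mp heq i hi
    have hMcount : ∀ v : ℕ,
        (pivotList (U ⊔ V)).count v = (pivotList U ++ pivotList V).count v := by
      intro v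
      by_cases h1 : 1 ≤ v ∧ v ≤ n
      · have hv : (v - 1) + 1 = v := by omega
        have := hpt (v - 1) (List.mem_range.mpr (by omega))
        rw [hv] at this
        simp only [List.count_append] at this ⊢
        omega
      · rw [List.count_eq_zero_of_not_mem, List.count_eq_zero_of_not_mem]
        · intro hmem
          rcases List.mem_append.mp hmem with hm | hm
          · exact h1 (mem_pivotList U v hm)
          · exact h1 (mem_pivotList V v hm)
        · exact fun hmem => h1 (mem_pivotList (U ⊔ V) v hmem)
    have hperm : (pivotList (U ⊔ V)).Perm (pivotList U ++ pivotList V) :=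
      List.perm_iff_count.mpr hMcount
    exact inversions_middle_le _ _ _ _ hperm (pivotList_sorted _)
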